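/- arXiv:0803.2578 — 2 statements merged into one kernel-verified Lean document; each statement's English description precedes it below -/
import Mathlib

section
/- (Bregman–Minc inequality) For an n×n 0-1 matrix A with row sums r_1, ..., r_n, the permanent of A satisfies perm(A) ≤ Π_{i=1}^n (r_i!)^(1/r_i), with the convention that a row of zeros makes the right side zero (and the permanent is then zero). -/
/-!
Schrijver's proof. Encode the matrix by its row supports `B i`; the permanent counts the
transversals `f` (injective, `f i ∈ B i`). Fix a row `i` and let `N_k` count the transversals
with `f i = k`, so `N = ∑_{k ∈ B i} N_k`. Convexity of `x log x` gives
`N ^ N ≤ #(B i) ^ N * ∏_f N_{f i}`, and `N_{f i}` is bounded by induction on the matrix with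
row `i` and column `f i` deleted. Multiply over all rows and regroup the factors by the row `j`
whose support was cut: for a transversal `f` exactly `#(B j) - 1` rows `i ≠ j` have `f i ∈ B j`,
and with `r! = r * (r - 1)!` the right side collapses to `(∏_j (r_j !) ^ (1 / r_j)) ^ (n N)`.
-/

open Finset

section Convexity

open Real

theorem sum_mul_log_sum_div_card_le {ι : Type*} (K : Finset ι) (x : ι → ℝ)
    (hx : ∀ k ∈ K, 0 ≤ x k) :
    (∑ k ∈ K, x k) * log ((∑ k ∈ K, x k) / #K) ≤ ∑ k ∈ K, x k * log (x k) := by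
  rcases K.eq_empty_or_nonempty with rfl | hne
  · simp
  have hK : (0 : ℝ) < #K := by exact_mod_cast hne.card_pos
  have jensen := convexOn_mul_log.map_sum_le (t := K) (w := fun _ => (#K : ℝ)⁻¹) (p := x)
    (fun _ _ => by positivity) (by simp [hK.ne']) hx
  simp only [smul_eq_mul, ← mul_sum] at jensen
  simp only [inv_mul_eq_div] at jensen
  calc (∑ k ∈ K, x k) * log ((∑ k ∈ K, x k) / #K)
      = (∑ k ∈ K, x k) / #K * log ((∑ k ∈ K, x k) / #K) * #K := by field_simp
    _ ≤ _ := (le_div_iff₀ hK).mp jensen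

theorem natCast_pow_self_eq_exp (m : ℕ) : (m : ℝ) ^ m = exp (m * log m) := by
  rcases m.eq_zero_or_pos with rfl | hm
  · simp
  · rw [← log_pow, exp_log (by positivity)]

theorem sum_pow_sum_le_card_pow_mul_prod_pow_self {ι : Type*} (K : Finset ι) (t : ι → ℕ) :
    (∑ k ∈ K, t k) ^ (∑ k ∈ K, t k) ≤ #K ^ (∑ k ∈ K, t k) * ∏ k ∈ K, t k ^ t k := by
  set S := ∑ k ∈ K, t k with hS
  rcases S.eq_zero_or_pos with hS0 | hS0
  · simp [hS0, Nat.one_le_iff_ne_zero, prod_ne_zero_iff]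
  have hK : (0 : ℝ) < #K := by
    obtain ⟨k, hk, -⟩ := exists_ne_zero_of_sum_ne_zero hS0.ne'
    exact_mod_cast card_pos.mpr ⟨k, hk⟩
  have hSR : (0 : ℝ) < S := by exact_mod_cast hS0
  have jensen := sum_mul_log_sum_div_card_le K (fun k => (t k : ℝ)) (fun _ _ => by positivity)
  rw [← Nat.cast_sum, ← hS, log_div hSR.ne' hK.ne'] at jensen
  suffices (S : ℝ) ^ S ≤ (#K : ℝ) ^ S * ∏ k ∈ K, (t k : ℝ) ^ t k by exact_mod_cast this
  rw [natCast_pow_self_eq_exp, prod_congr rfl fun k _ => natCast_pow_self_eq_exp (t k),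
    ← exp_sum, ← rpow_natCast, rpow_def_of_pos hK, ← exp_add, exp_le_exp]
  linarith

theorem card_pow_card_le_prod_card_mul_card_fiber {σ κ : Type*} [DecidableEq κ]
    (S : Finset σ) (T : Finset κ) (g : σ → κ) (hg : ∀ x ∈ S, g x ∈ T) :
    #S ^ #S ≤ ∏ x ∈ S, #T * #{y ∈ S | g y = g x} := by
  have hsum := card_eq_sum_card_fiberwise hg
  rw [prod_mul_distrib, prod_const, ← prod_fiberwise_of_maps_to' hg fun k => #{y ∈ S | g y = k}]
  simp only [prod_const]
  calc #S ^ #S = (∑ k ∈ T, #{y ∈ S | g y = k}) ^ (∑ k ∈ T, #{y ∈ S | g y = k}) := by rw [← hsum]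
    _ ≤ _ := sum_pow_sum_le_card_pow_mul_prod_pow_self T _
    _ = _ := by rw [← hsum]

end Convexity

noncomputable def bregmanFactor (r : ℕ) : ℝ :=
  if r = 0 then 0 else (r.factorial : ℝ) ^ (1 / (r : ℝ))

theorem bregmanFactor_nonneg (r : ℕ) : 0 ≤ bregmanFactor r := by
  unfold bregmanFactor; split <;> positivity

theorem bregmanFactor_pow_self (r : ℕ) : bregmanFactor r ^ r = r.factorial := by
  rcases r.eq_zero_or_pos with rfl | hr
  · simp
  rw [bregmanFactor, if_neg hr.ne', ← Real.rpow_natCast, ← Real.rpow_mul (by positivity), one_div,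
    inv_mul_cancel₀ (by positivity), Real.rpow_one]

theorem natCast_mul_bregmanFactor_pred_pow_mul_bregmanFactor_pow {r m : ℕ} (hr : 1 ≤ r)
    (hrm : r ≤ m) :
    r * bregmanFactor (r - 1) ^ (r - 1) * bregmanFactor r ^ (m - r) = bregmanFactor r ^ m := by
  rw [bregmanFactor_pow_self, ← Nat.cast_mul, Nat.mul_factorial_pred (by omega),
    ← bregmanFactor_pow_self, ← pow_add, Nat.add_sub_cancel' hrm]

section Transversals

variable {α : Type*} [Fintype α] [DecidableEq α]

open Classical in
/-- Outside `s` a transversal is the identity, so that the transversals for all row sets `s`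
live in the same finset of functions `α → α`. -/
noncomputable def transversals (s : Finset α) (B : α → Finset α) : Finset (α → α) :=
  {f | (∀ j ∈ s, f j ∈ B j) ∧ (∀ j ∉ s, f j = j) ∧ Set.InjOn f s}

variable {s t : Finset α} {B : α → Finset α} {f : α → α}

theorem mem_transversals :
    f ∈ transversals s B ↔ (∀ j ∈ s, f j ∈ B j) ∧ (∀ j ∉ s, f j = j) ∧ Set.InjOn f s := by
  simp [transversals]

theorem transversals_empty (B : α → Finset α) : transversals ∅ B = {id} := by
  ext f
  simp [mem_transversals, funext_iff]

theorem update_self_mem_transversals_erase (hf : f ∈ transversals s B) {i : α} (hi : i ∈ s) :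
    Function.update f i i ∈ transversals (s.erase i) fun j => (B j).erase (f i) := by
  obtain ⟨hB, hout, hinj⟩ := mem_transversals.mp hf
  refine mem_transversals.mpr ⟨fun j hj => ?_, fun j hj => ?_, fun a ha b hb hab => ?_⟩
  · obtain ⟨hji, hj⟩ := mem_erase.mp hj
    rw [Function.update_of_ne hji]
    exact mem_erase.mpr ⟨fun h => hji (hinj hj hi h), hB j hj⟩
  · by_cases hji : j = i
    · simp [hji]
    · simpa [hji] using hout j (by simpa [hji] using hj)
  · obtain ⟨hai, ha⟩ := mem_erase.mp ha
    obtain ⟨hbi, hb⟩ := mem_erase.mp hb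
    rw [Function.update_of_ne hai, Function.update_of_ne hbi] at hab
    exact hinj ha hb hab

theorem update_mem_transversals {g : α → α} {i k : α} (hi : i ∈ s) (hk : k ∈ B i)
    (hg : g ∈ transversals (s.erase i) fun j => (B j).erase k) :
    Function.update g i k ∈ transversals s B := by
  obtain ⟨hB, hout, hinj⟩ := mem_transversals.mp hg
  have hne : ∀ j ∈ s, j ≠ i → g j ≠ k := fun j hj hji =>
    (mem_erase.mp (hB j (mem_erase.mpr ⟨hji, hj⟩))).1
  refine mem_transversals.mpr ⟨fun j hj => ?_, fun j hj => ?_, fun a ha b hb hab => ?_⟩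
  · by_cases hji : j = i
    · simpa [hji] using hk
    · rw [Function.update_of_ne hji]
      exact mem_of_mem_erase (hB j (mem_erase.mpr ⟨hji, hj⟩))
  · have hji : j ≠ i := by rintro rfl; exact hj hi
    simpa [hji] using hout j (by simp [hj])
  · by_cases hai : a = i <;> by_cases hbi : b = i
    · rw [hai, hbi]
    · simp only [hai, Function.update_self, Function.update_of_ne hbi] at hab
      exact absurd hab.symm (hne b hb hbi)
    · simp only [hbi, Function.update_self, Function.update_of_ne hai] at hab
      exact absurd hab (hne a ha hai)
    · simp only [Function.update_of_ne hai, Function.update_of_ne hbi] at hab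
      exact hinj (mem_erase.mpr ⟨hai, ha⟩) (mem_erase.mpr ⟨hbi, hb⟩) hab

theorem card_filter_apply_eq_card_transversals_erase {i k : α} (hi : i ∈ s) (hk : k ∈ B i) :
    #{f ∈ transversals s B | f i = k} = #(transversals (s.erase i) fun j => (B j).erase k) := by
  refine card_nbij' (Function.update · i i) (Function.update · i k) (fun f hf => ?_)
    (fun g hg => ?_) (fun f hf => ?_) (fun g hg => ?_)
  · obtain ⟨hfT, rfl⟩ := mem_filter.mp (mem_coe.mp hf)
    exact update_self_mem_transversals_erase hfT hi
  · exact mem_filter.mpr ⟨update_mem_transversals hi hk hg, Function.update_self ..⟩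
  · simp only [Function.update_idem, Function.update_eq_self_iff]
    exact (mem_filter.mp hf).2.symm
  · simp only [Function.update_idem, Function.update_eq_self_iff]
    exact ((mem_transversals.mp hg).2.1 i (notMem_erase i s)).symm

theorem card_transversals_pow_card_le_prod {i : α} (hi : i ∈ s) :
    #(transversals s B) ^ #(transversals s B) ≤
      ∏ f ∈ transversals s B, #(B i) * #(transversals (s.erase i) fun j => (B j).erase (f i)) := by
  have hmaps : ∀ f ∈ transversals s B, f i ∈ B i := fun f hf => (mem_transversals.mp hf).1 i hi
  refine (card_pow_card_le_prod_card_mul_card_fiber _ _ (· i) hmaps).trans_eq ?_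
  refine prod_congr rfl fun f hf => ?_
  rw [card_filter_apply_eq_card_transversals_erase hi (hmaps f hf)]

theorem card_filter_erase_apply_mem_eq_card_sub_one (hst : #s = #t) (hB : ∀ j ∈ s, B j ⊆ t)
    (hf : f ∈ transversals s B) {j : α} (hj : j ∈ s) :
    #{i ∈ s.erase j | f i ∈ B j} = #(B j) - 1 := by
  obtain ⟨hfB, -, hinj⟩ := mem_transversals.mp hf
  have himage : s.image f = t :=
    eq_of_subset_of_card_le (image_subset_iff.mpr fun a ha => hB a ha (hfB a ha))
      (by rw [card_image_of_injOn hinj, hst])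
  have hpreimage : {i ∈ s | f i ∈ B j}.image f = B j := by
    rw [← filter_image (p := (· ∈ B j)), himage, filter_mem_eq_inter, inter_eq_right.mpr (hB j hj)]
  rw [filter_erase, card_erase_of_mem (mem_filter.mpr ⟨hj, hfB j hj⟩),
    ← card_image_of_injOn (hinj.mono (coe_subset.mpr (filter_subset _ _))), hpreimage]

theorem natCast_card_mul_prod_bregmanFactor_card_erase (hst : #s = #t)
    (hB : ∀ j ∈ s, B j ⊆ t) (hf : f ∈ transversals s B) {j : α} (hj : j ∈ s) :
    (#(B j) : ℝ) * ∏ i ∈ s.erase j, bregmanFactor #((B j).erase (f i)) =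
      bregmanFactor #(B j) ^ #s := by
  have hfj : f j ∈ B j := (mem_transversals.mp hf).1 j hj
  have hhit := card_filter_erase_apply_mem_eq_card_sub_one hst hB hf hj
  have hsplit := card_filter_add_card_filter_not (s := s.erase j) (fun i => f i ∈ B j)
  rw [card_erase_of_mem hj, hhit] at hsplit
  have hr : 1 ≤ #(B j) := card_pos.mpr ⟨_, hfj⟩
  have hrs : #(B j) ≤ #s := hst ▸ card_le_card (hB j hj)
  simp only [card_erase_eq_ite, apply_ite bregmanFactor]
  have hmiss : #{i ∈ s.erase j | f i ∉ B j} = #s - #(B j) := by omega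
  rw [prod_ite, prod_const, prod_const, hhit, hmiss, ← mul_assoc]
  exact natCast_mul_bregmanFactor_pred_pow_mul_bregmanFactor_pow hr hrs

theorem natCast_card_transversals_le (hst : #s = #t) (hB : ∀ j ∈ s, B j ⊆ t) :
    (#(transversals s B) : ℝ) ≤ ∏ j ∈ s, bregmanFactor #(B j) := by
  induction s using Finset.strongInduction generalizing t B with | H s ih =>
  rcases s.eq_empty_or_nonempty with rfl | hs
  · simp [transversals_empty]
  set T := transversals s B
  have hP : 0 ≤ ∏ j ∈ s, bregmanFactor #(B j) := prod_nonneg fun j _ => bregmanFactor_nonneg _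
  rcases (#T).eq_zero_or_pos with hT | hT
  · rwa [hT, Nat.cast_zero]
  have row : ∀ i ∈ s, (#T : ℝ) ^ #T ≤
      ∏ f ∈ T, (#(B i) * ∏ j ∈ s.erase i, bregmanFactor #((B j).erase (f i))) := by
    intro i hi
    calc (#T : ℝ) ^ #T
        ≤ ∏ f ∈ T, ((#(B i) * #(transversals (s.erase i) fun j => (B j).erase (f i)) : ℕ) : ℝ) := by
          exact_mod_cast card_transversals_pow_card_le_prod hi
      _ ≤ _ := by
        push_cast
        refine prod_le_prod (fun _ _ => by positivity) fun f hf =>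
          mul_le_mul_of_nonneg_left ?_ (by positivity)
        have hfi : f i ∈ B i := (mem_transversals.mp hf).1 i hi
        refine ih _ (erase_ssubset hi) ?_ fun j hj =>
          erase_subset_erase _ (hB j (mem_of_mem_erase hj))
        rw [card_erase_of_mem hi, card_erase_of_mem (hB i hi hfi), hst]
  have hpow : (#T : ℝ) ^ (#s * #T) ≤ (∏ j ∈ s, bregmanFactor #(B j)) ^ (#s * #T) := calc
    (#T : ℝ) ^ (#s * #T) = ∏ i ∈ s, (#T : ℝ) ^ #T := by rw [prod_const, pow_mul']
    _ ≤ ∏ i ∈ s, ∏ f ∈ T, (#(B i) * ∏ j ∈ s.erase i, bregmanFactor #((B j).erase (f i))) :=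
      prod_le_prod (fun _ _ => by positivity) row
    _ = ∏ f ∈ T, ∏ j ∈ s, (#(B j) * ∏ i ∈ s.erase j, bregmanFactor #((B j).erase (f i))) := by
      rw [prod_comm]
      refine prod_congr rfl fun f _ => ?_
      rw [prod_mul_distrib, prod_mul_distrib, prod_comm' fun x y => ?_]
      simp only [mem_erase]
      tauto
    _ = ∏ f ∈ T, ∏ j ∈ s, bregmanFactor #(B j) ^ #s :=
      prod_congr rfl fun f hf => prod_congr rfl fun j hj =>
        natCast_card_mul_prod_bregmanFactor_card_erase hst hB hf hj
    _ = (∏ j ∈ s, bregmanFactor #(B j)) ^ (#s * #T) := by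
      rw [prod_const, prod_pow, ← pow_mul]
  exact le_of_pow_le_pow_left₀ (mul_pos hs.card_pos hT).ne' hP hpow

end Transversals

theorem Matrix.permanent_eq_card_transversals {α : Type*} [Fintype α] [DecidableEq α]
    (A : Matrix α α ℕ) (hA : ∀ i j, A i j = 0 ∨ A i j = 1) :
    A.permanent = #(transversals univ fun i => {j | A i j = 1}) := by
  have hprod : ∀ σ : Equiv.Perm α, ∏ i, A i (σ i) = if ∀ i, A i (σ i) = 1 then 1 else 0 := by
    intro σ
    split_ifs with h
    · exact prod_eq_one fun i _ => h i
    · obtain ⟨i, hi⟩ := not_forall.mp h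
      exact prod_eq_zero (mem_univ i) ((hA i _).resolve_right hi)
  rw [← permanent_transpose, permanent]
  simp only [transpose_apply, hprod, sum_boole, Nat.cast_id]
  refine card_bij (fun σ _ => ⇑σ) (fun σ hσ => ?_) (fun σ _ τ _ h => DFunLike.coe_injective h)
    fun f hf => ?_
  · simp only [mem_filter_univ] at hσ
    simp [mem_transversals, hσ, σ.injective.injOn]
  · obtain ⟨hfB, -, hinj⟩ := mem_transversals.mp hf
    have hbij : f.Bijective := (Set.injOn_univ.mp (by simpa using hinj)).bijective_of_finite
    exact ⟨Equiv.ofBijective f hbij, by simpa using hfB, rfl⟩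

/-- The Bregman–Minc inequality: for an `n × n` `0-1` matrix `A` with row sums
`r i`, the permanent of `A` is at most `∏ i, (r i)! ^ (1 / r i)`, with the
convention that a row of zeros makes the right-hand side zero. -/
theorem bregman_minc {n : ℕ} (A : Matrix (Fin n) (Fin n) ℕ)
    (hA : ∀ i j, A i j = 0 ∨ A i j = 1) :
    (A.permanent : ℝ) ≤
      ∏ i : Fin n, if (∑ j, A i j) = 0 then (0 : ℝ)
        else ((∑ j, A i j).factorial : ℝ) ^ (1 / ((∑ j, A i j : ℕ) : ℝ)) := by
  have hrow : ∀ i, ∑ j, A i j = #{j | A i j = 1} := fun i => by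
    rw [card_filter]
    exact sum_congr rfl fun j _ => by rcases hA i j with h | h <;> simp [h]
  calc (A.permanent : ℝ) = #(transversals univ fun i => {j | A i j = 1}) := by
        rw [A.permanent_eq_card_transversals hA]
    _ ≤ ∏ i, bregmanFactor #{j | A i j = 1} :=
        natCast_card_transversals_le rfl fun _ _ => subset_univ _
    _ = _ := by simp only [← hrow]; rfl
end

section
/- (Equality case of Bregman–Minc) Let A be an n×n 0-1 matrix with all row sums r_i ≥ 1. Then perm(A) = Π_{i=1}^n (r_i!)^(1/r_i) if and only if there exist permutation matrices P, Q such that PAQ is a block-diagonal matrix whose diagonal blocks are square all-ones matrices. -/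
/-!
Schrijver's proof of Brègman's bound, run on minors together with its equality case.  For a
free row `a` of degree `r_a`, expanding the number `P` of perfect matchings along `a` and
applying Jensen's inequality to `x ↦ x log x` gives
`P log P ≤ P log r_a + ∑_{c ~ a} P_{ac} log P_{ac}`,
where `P_{ac}` counts the matchings using the edge `(a, c)`.  Bounding `log P_{ac}` inductively
and summing over `a`, a double count over (matching, column) pairs turns the right-hand side
into `#columns * P * ∑_b log (r_b!) / r_b`.

If the bound is attained, every inequality is tight: each `P_{ac}` equals `P / r_a > 0` and the
minor at `(a, c)` attains its bound, so by induction it is a disjoint union of bicliques, and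
three such minors force the same shape on the whole graph.  A perfect matching then reads off
the colouring of the statement.  Conversely, a block matrix of all-ones `k_v × k_v` blocks has
permanent `∏ k_v!`, which is the bound.
-/

open Finset Real Equiv Function
open scoped Nat

lemma mul_inv_mul_log_inv_mul {k : ℝ} (hk : k ≠ 0) (T : ℝ) :
    k * (k⁻¹ * T * log (k⁻¹ * T)) = T * log T - T * log k := by
  rcases eq_or_ne T 0 with rfl | hT
  · simp
  rw [log_mul (inv_ne_zero hk) hT, log_inv]
  field_simp
  ring

lemma sum_mul_log_sum_le {ι : Type*} {s : Finset ι} {t : ι → ℝ}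
    (ht : ∀ i ∈ s, 0 ≤ t i) :
    (∑ i ∈ s, t i) * log (∑ i ∈ s, t i) ≤
      (∑ i ∈ s, t i) * log #s + ∑ i ∈ s, t i * log (t i) := by
  rcases s.eq_empty_or_nonempty with rfl | hs
  · simp
  have hk : (0 : ℝ) < #s := by exact_mod_cast hs.card_pos
  have hjensen := strictConvexOn_mul_log.convexOn.map_sum_le (t := s) (p := t)
    (w := fun _ => (#s : ℝ)⁻¹) (fun _ _ => by positivity) (by simp [hk.ne']) ht
  simp only [smul_eq_mul, ← mul_sum] at hjensen
  have := mul_le_mul_of_nonneg_left hjensen hk.le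
  rw [mul_inv_mul_log_inv_mul hk.ne', mul_inv_cancel_left₀ hk.ne'] at this
  linarith

lemma eq_div_card_of_sum_mul_log_sum_le {ι : Type*} {s : Finset ι} {t : ι → ℝ}
    (ht : ∀ i ∈ s, 0 ≤ t i)
    (h : (∑ i ∈ s, t i) * log #s + ∑ i ∈ s, t i * log (t i) ≤
      (∑ i ∈ s, t i) * log (∑ i ∈ s, t i)) :
    ∀ i ∈ s, t i = (∑ j ∈ s, t j) / #s := by
  intro i hi
  have hk : (0 : ℝ) < #s := by exact_mod_cast card_pos.2 ⟨i, hi⟩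
  have hconst := strictConvexOn_mul_log.eq_of_le_map_sum (t := s) (p := t)
    (w := fun _ => (#s : ℝ)⁻¹) (fun _ _ => by positivity) (by simp [hk.ne']) ht (by
      simp only [smul_eq_mul, ← mul_sum]
      refine le_of_mul_le_mul_left ?_ hk
      rw [mul_inv_mul_log_inv_mul hk.ne', mul_inv_cancel_left₀ hk.ne']
      linarith)
  rw [sum_congr rfl fun j hj => hconst hj hi, sum_const, nsmul_eq_mul,
    mul_div_cancel_left₀ _ hk.ne']

namespace BregmanMinc

variable {α : Type*} (E : α → α → Prop)

def IsBicliqueUnion (R C : Finset α) : Prop :=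
  ∀ a ∈ R, ∀ a' ∈ R, ∀ c ∈ C, ∀ c' ∈ C, E a c → E a' c → E a c' → E a' c'

variable {E} in
lemma exists_colouring_of_isBicliqueUnion [Fintype α] (hB : IsBicliqueUnion E univ univ)
    {τ : Perm α} (hτ : ∀ j, E (τ j) j) :
    ∃ c : α → α, ∀ i j, E (τ i) j ↔ c i = c j := by
  let s : Setoid α :=
    ⟨fun i j => E (τ i) j, ⟨hτ, fun hij => hB _ (mem_univ _) _ (mem_univ _) _ (mem_univ _) _
      (mem_univ _) hij (hτ _) (hτ _), fun hij hjk => hB _ (mem_univ _) _ (mem_univ _) _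
      (mem_univ _) _ (mem_univ _) (hτ _) hij hjk⟩⟩
  exact ⟨fun i => (Quotient.mk s i).out, fun i j => by rw [Quotient.out_inj, Quotient.eq]; rfl⟩

variable [Fintype α] [DecidableEq α] [DecidableRel E]

/-- The minor with the columns `F` and the rows `F.image f` deleted, encoded by the partial
assignment `f`: its perfect matchings are the permutations (sending columns to rows) that extend
`f` and use only pairs `E (σ c) c` elsewhere. -/
def matchings (F : Finset α) (f : α → α) : Finset (Perm α) :=
  {σ | (∀ c ∈ F, σ c = f c) ∧ ∀ c ∉ F, E (σ c) c}

def degree (F : Finset α) (b : α) : ℕ := #{c ∈ Fᶜ | E b c}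

noncomputable def bregmanTerm (k : ℕ) : ℝ := log k ! / k

noncomputable def bregmanBound (F : Finset α) (f : α → α) : ℝ :=
  ∑ b ∈ (F.image f)ᶜ, bregmanTerm (degree E F b)

variable {E} {F : Finset α} {f : α → α} {σ : Perm α}

lemma mem_matchings :
    σ ∈ matchings E F f ↔ (∀ c ∈ F, σ c = f c) ∧ ∀ c ∉ F, E (σ c) c := by
  simp [matchings]

lemma image_eq_image_of_mem_matchings (hσ : σ ∈ matchings E F f) : F.image f = F.image σ :=
  image_congr fun c hc => ((mem_matchings.1 hσ).1 c hc).symm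

lemma image_compl_eq_of_mem_matchings (hσ : σ ∈ matchings E F f) :
    Fᶜ.image σ = (F.image f)ᶜ := by
  rw [image_eq_image_of_mem_matchings hσ, ← coe_inj]
  push_cast
  exact Set.image_compl_eq σ.bijective

lemma card_compl_image_eq_of_mem_matchings (hσ : σ ∈ matchings E F f) :
    #(F.image f)ᶜ = #Fᶜ := by
  rw [← image_compl_eq_of_mem_matchings hσ, card_image_of_injective _ σ.injective]

lemma apply_mem_compl_image (hσ : σ ∈ matchings E F f) {c : α} (hc : c ∈ Fᶜ) :
    σ c ∈ (F.image f)ᶜ :=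
  image_compl_eq_of_mem_matchings hσ ▸ mem_image_of_mem σ hc

lemma symm_apply_mem_compl (hσ : σ ∈ matchings E F f) {b : α} (hb : b ∈ (F.image f)ᶜ) :
    σ.symm b ∈ Fᶜ := by
  rw [← image_compl_eq_of_mem_matchings hσ] at hb
  obtain ⟨c, hc, rfl⟩ := mem_image.1 hb
  simpa using hc

lemma rel_apply (hσ : σ ∈ matchings E F f) {c : α} (hc : c ∈ Fᶜ) : E (σ c) c :=
  (mem_matchings.1 hσ).2 c (mem_compl.1 hc)

lemma compl_image_insert_update {a c : α} (hc : c ∉ F) :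
    ((insert c F).image (update f c a))ᶜ = (F.image f)ᶜ.erase a := by
  rw [image_insert, update_self,
    image_congr fun x hx => update_of_ne (ne_of_mem_of_not_mem hx hc) _ _, compl_insert]

lemma filter_apply_eq_matchings {a c : α} (hc : c ∉ F) (hac : E a c) :
    {σ ∈ matchings E F f | σ c = a} = matchings E (insert c F) (update f c a) := by
  ext σ
  simp only [mem_filter, mem_matchings, mem_insert]
  constructor
  · rintro ⟨⟨hF, hE⟩, rfl⟩
    refine ⟨fun d hd => ?_, fun d hd => hE d (by tauto)⟩
    rcases hd with rfl | hd
    · simp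
    · rw [hF d hd, update_of_ne (ne_of_mem_of_not_mem hd hc)]
  · rintro ⟨hF, hE⟩
    have hσc : σ c = a := by simpa using hF c (Or.inl rfl)
    refine ⟨⟨fun d hd => ?_, fun d hd => ?_⟩, hσc⟩
    · rw [hF d (Or.inr hd), update_of_ne (ne_of_mem_of_not_mem hd hc)]
    · rcases eq_or_ne d c with rfl | hdc
      · rwa [hσc]
      · exact hE d (by tauto)

lemma card_matchings_eq_sum_row {a : α} (ha : a ∈ (F.image f)ᶜ) :
    #(matchings E F f) =
      ∑ c ∈ Fᶜ with E a c, #(matchings E (insert c F) (update f c a)) := by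
  rw [card_eq_sum_card_fiberwise (f := fun σ => σ.symm a) (t := {c ∈ Fᶜ | E a c})
    fun σ hσ => ?_]
  · refine sum_congr rfl fun c hc => ?_
    obtain ⟨hc, hac⟩ := mem_filter.1 hc
    rw [← filter_apply_eq_matchings (mem_compl.1 hc) hac]
    congr 1
    exact filter_congr fun σ _ => by rw [Equiv.symm_apply_eq, eq_comm]
  · have h := symm_apply_mem_compl hσ ha
    exact mem_filter.2 ⟨h, by simpa using rel_apply hσ h⟩

lemma sum_matchings_apply {c : α} (hc : c ∈ Fᶜ) (g : α → ℝ) :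
    ∑ σ ∈ matchings E F f, g (σ c) =
      ∑ a ∈ (F.image f)ᶜ with E a c, #(matchings E (insert c F) (update f c a)) * g a := by
  rw [← sum_fiberwise_of_maps_to (g := fun σ => σ c) (t := {a ∈ (F.image f)ᶜ | E a c})
    fun σ hσ => mem_filter.2 ⟨apply_mem_compl_image hσ hc, rel_apply hσ hc⟩]
  refine sum_congr rfl fun a ha => ?_
  rw [sum_congr rfl fun σ hσ => by rw [(mem_filter.1 hσ).2], sum_const, nsmul_eq_mul,
    filter_apply_eq_matchings (mem_compl.1 hc) (mem_filter.1 ha).2]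

lemma degree_insert {b c : α} (hc : c ∉ F) :
    degree E (insert c F) b = if E b c then degree E F b - 1 else degree E F b := by
  unfold degree
  rw [compl_insert, filter_erase]
  split_ifs with h
  · rw [card_erase_of_mem (mem_filter.2 ⟨mem_compl.2 hc, h⟩)]
  · rw [erase_eq_of_notMem fun hm => h (mem_filter.1 hm).2]

lemma degree_le_card_compl (b : α) : degree E F b ≤ #Fᶜ := card_filter_le _ _

lemma natCast_mul_bregmanTerm (k : ℕ) : k * bregmanTerm k = log k ! := by
  rcases eq_or_ne k 0 with rfl | hk
  · simp
  rw [bregmanTerm, mul_div_cancel₀ _ (Nat.cast_ne_zero.2 hk)]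

lemma bregmanTerm_nonneg (k : ℕ) : 0 ≤ bregmanTerm k :=
  div_nonneg (log_nonneg (by exact_mod_cast k.factorial_pos)) k.cast_nonneg

lemma natCast_mul_bregmanTerm_pred_add {k m : ℕ} (hkm : k ≤ m) :
    k * bregmanTerm (k - 1) + (m - k : ℕ) * bregmanTerm k - bregmanTerm (k - 1) =
      m * bregmanTerm k - log k := by
  obtain _ | j := k
  · simp [bregmanTerm]
  have hj := natCast_mul_bregmanTerm j
  have hj1 := natCast_mul_bregmanTerm (j + 1)
  rw [Nat.factorial_succ, Nat.cast_mul, log_mul (by positivity) (by positivity)] at hj1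
  push_cast [Nat.cast_sub hkm] at hj1 ⊢
  linarith

lemma sum_bregmanTerm_degree_insert (b : α) :
    ∑ c ∈ Fᶜ, bregmanTerm (degree E (insert c F) b) =
      degree E F b * bregmanTerm (degree E F b - 1) +
        (#Fᶜ - degree E F b : ℕ) * bregmanTerm (degree E F b) := by
  rw [sum_congr rfl fun c hc => by rw [degree_insert (mem_compl.1 hc), apply_ite bregmanTerm],
    sum_ite, sum_const, sum_const, nsmul_eq_mul, nsmul_eq_mul, filter_not,
    card_sdiff_of_subset (filter_subset _ _)]
  rfl

lemma sum_bregmanBound_minor (hσ : σ ∈ matchings E F f) :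
    ∑ c ∈ Fᶜ, bregmanBound E (insert c F) (update f c (σ c)) =
      #Fᶜ * bregmanBound E F f - ∑ b ∈ (F.image f)ᶜ, log (degree E F b) := by
  have hminor : ∀ c ∈ Fᶜ, bregmanBound E (insert c F) (update f c (σ c)) =
      ∑ b ∈ (F.image f)ᶜ, bregmanTerm (degree E (insert c F) b) -
        bregmanTerm (degree E F (σ c) - 1) := fun c hc => by
    rw [bregmanBound, compl_image_insert_update (mem_compl.1 hc),
      sum_erase_eq_sub (apply_mem_compl_image hσ hc), degree_insert (mem_compl.1 hc),
      if_pos (rel_apply hσ hc)]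
  have hreindex : ∑ c ∈ Fᶜ, bregmanTerm (degree E F (σ c) - 1) =
      ∑ b ∈ (F.image f)ᶜ, bregmanTerm (degree E F b - 1) := by
    rw [← image_compl_eq_of_mem_matchings hσ, sum_image fun x _ y _ h => σ.injective h]
  rw [sum_congr rfl hminor, sum_sub_distrib, sum_comm, hreindex, bregmanBound, mul_sum,
    ← sum_sub_distrib, ← sum_sub_distrib]
  refine sum_congr rfl fun b _ => ?_
  rw [sum_bregmanTerm_degree_insert, natCast_mul_bregmanTerm_pred_add (degree_le_card_compl b)]

lemma sum_row_eq_card_mul_bregmanBound :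
    ∑ a ∈ (F.image f)ᶜ, (#(matchings E F f) * log (degree E F a) +
      ∑ c ∈ Fᶜ with E a c, #(matchings E (insert c F) (update f c a)) *
        bregmanBound E (insert c F) (update f c a)) =
      #Fᶜ * #(matchings E F f) * bregmanBound E F f := by
  have hswap : ∑ a ∈ (F.image f)ᶜ, ∑ c ∈ Fᶜ with E a c,
      (#(matchings E (insert c F) (update f c a)) : ℝ) *
        bregmanBound E (insert c F) (update f c a) =
      ∑ c ∈ Fᶜ, ∑ a ∈ (F.image f)ᶜ with E a c,
        #(matchings E (insert c F) (update f c a)) * bregmanBound E (insert c F) (update f c a) :=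
    sum_comm' fun a c => by simp only [mem_filter]; tauto
  rw [sum_add_distrib, ← mul_sum, hswap,
    sum_congr rfl fun c hc => (sum_matchings_apply hc fun a => _).symm, sum_comm,
    sum_congr rfl fun σ hσ => sum_bregmanBound_minor hσ, sum_const, nsmul_eq_mul]
  ring

lemma bregmanBound_nonneg (F : Finset α) (f : α → α) : 0 ≤ bregmanBound E F f :=
  sum_nonneg fun _ _ => bregmanTerm_nonneg _

lemma mul_log_card_matchings_le {a : α} (ha : a ∈ (F.image f)ᶜ) :
    #(matchings E F f) * log #(matchings E F f) ≤
      #(matchings E F f) * log (degree E F a) +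
        ∑ c ∈ Fᶜ with E a c, #(matchings E (insert c F) (update f c a)) *
          log #(matchings E (insert c F) (update f c a)) := by
  rw [card_matchings_eq_sum_row ha]
  push_cast
  exact sum_mul_log_sum_le fun _ _ => Nat.cast_nonneg _

lemma card_matchings_minor_eq_of_le {a : α} (ha : a ∈ (F.image f)ᶜ)
    (h : #(matchings E F f) * log (degree E F a) +
        ∑ c ∈ Fᶜ with E a c, #(matchings E (insert c F) (update f c a)) *
          log #(matchings E (insert c F) (update f c a)) ≤
      #(matchings E F f) * log #(matchings E F f)) :
    ∀ c ∈ Fᶜ, E a c →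
      #(matchings E (insert c F) (update f c a)) = (#(matchings E F f) / degree E F a : ℝ) := by
  intro c hc hac
  rw [card_matchings_eq_sum_row ha] at h ⊢
  push_cast at h ⊢
  exact eq_div_card_of_sum_mul_log_sum_le (fun _ _ => Nat.cast_nonneg _) h c
    (mem_filter.2 ⟨hc, hac⟩)

lemma card_compl_insert {c : α} (hc : c ∈ Fᶜ) : #(insert c F)ᶜ = #Fᶜ - 1 := by
  rw [compl_insert, card_erase_of_mem hc]

lemma mul_log_card_matchings_le_of_minors {a : α} (ha : a ∈ (F.image f)ᶜ)
    (hminor : ∀ c ∈ Fᶜ, E a c → log #(matchings E (insert c F) (update f c a)) ≤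
      bregmanBound E (insert c F) (update f c a)) :
    #(matchings E F f) * log #(matchings E F f) ≤
      #(matchings E F f) * log (degree E F a) +
        ∑ c ∈ Fᶜ with E a c, #(matchings E (insert c F) (update f c a)) *
          bregmanBound E (insert c F) (update f c a) :=
  (mul_log_card_matchings_le ha).trans <| (add_le_add_iff_left _).2 <| sum_le_sum fun c hc =>
    mul_le_mul_of_nonneg_left (hminor c (mem_filter.1 hc).1 (mem_filter.1 hc).2)
      (Nat.cast_nonneg _)

theorem log_card_matchings_le_bregmanBound (F : Finset α) (f : α → α) :
    log #(matchings E F f) ≤ bregmanBound E F f := by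
  induction hm : #Fᶜ generalizing F f with
  | zero =>
    have hF : F = univ := (compl_eq_empty_iff F).1 (card_eq_zero.1 hm)
    have hcard : #(matchings E F f) ≤ 1 :=
      card_le_one.2 fun σ hσ τ hτ => Equiv.ext fun x => by
        have hx : x ∈ F := hF ▸ mem_univ x
        rw [(mem_matchings.1 hσ).1 x hx, (mem_matchings.1 hτ).1 x hx]
    exact (log_nonpos (Nat.cast_nonneg _) (by exact_mod_cast hcard)).trans
      (bregmanBound_nonneg F f)
  | succ m ih =>
    rcases (matchings E F f).eq_empty_or_nonempty with hS | ⟨σ, hσ⟩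
    · simp [hS, bregmanBound_nonneg]
    have hP : (0 : ℝ) < #(matchings E F f) := by exact_mod_cast card_pos.2 ⟨σ, hσ⟩
    have hsum := sum_le_sum fun a (ha : a ∈ (F.image f)ᶜ) =>
      mul_log_card_matchings_le_of_minors ha fun c hc _ =>
        ih _ _ (by rw [card_compl_insert hc, hm]; rfl)
    rw [sum_const, card_compl_image_eq_of_mem_matchings hσ, sum_row_eq_card_mul_bregmanBound,
      nsmul_eq_mul, mul_assoc] at hsum
    exact le_of_mul_le_mul_left (le_of_mul_le_mul_left hsum (by rw [hm]; positivity)) hP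

lemma minor_tight_of_row_tight (hS : (matchings E F f).Nonempty) {a c : α}
    (ha : a ∈ (F.image f)ᶜ) (hc : c ∈ Fᶜ) (hac : E a c)
    (hrow : #(matchings E F f) * log (degree E F a) +
        ∑ c ∈ Fᶜ with E a c, #(matchings E (insert c F) (update f c a)) *
          bregmanBound E (insert c F) (update f c a) ≤
      #(matchings E F f) * log #(matchings E F f)) :
    (matchings E (insert c F) (update f c a)).Nonempty ∧
      log #(matchings E (insert c F) (update f c a)) =
        bregmanBound E (insert c F) (update f c a) := by
  have hterm : ∀ c, (#(matchings E (insert c F) (update f c a)) : ℝ) *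
      log #(matchings E (insert c F) (update f c a)) ≤
      #(matchings E (insert c F) (update f c a)) * bregmanBound E (insert c F) (update f c a) :=
    fun c => mul_le_mul_of_nonneg_left (log_card_matchings_le_bregmanBound _ _) (Nat.cast_nonneg _)
  have hca : c ∈ Fᶜ.filter (E a) := mem_filter.2 ⟨hc, hac⟩
  have hjensen := mul_log_card_matchings_le (E := E) ha
  have hsum := sum_le_sum fun c (_ : c ∈ Fᶜ.filter (E a)) => hterm c
  have ht := card_matchings_minor_eq_of_le ha (by linarith) c hc hac
  have htpos : (0 : ℝ) < #(matchings E (insert c F) (update f c a)) := by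
    rw [ht]
    exact div_pos (by exact_mod_cast hS.card_pos) (by exact_mod_cast card_pos.2 ⟨c, hca⟩)
  refine ⟨card_pos.1 (by exact_mod_cast htpos), mul_left_cancel₀ htpos.ne' ?_⟩
  exact (sum_eq_sum_iff_of_le fun c _ => hterm c).1 (by linarith) c hca

lemma exists_mem_matchings_apply_eq {a c : α} (hc : c ∈ Fᶜ) (hac : E a c)
    (hne : (matchings E (insert c F) (update f c a)).Nonempty) :
    ∃ σ ∈ matchings E F f, σ c = a := by
  obtain ⟨σ, hσ⟩ := hne
  rw [← filter_apply_eq_matchings (mem_compl.1 hc) hac, mem_filter] at hσ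
  exact ⟨σ, hσ⟩

/-- Given `a ~ c`, `a' ~ c`, `a ~ c'`, a matching `M` through `(a, c)` matches `a'` to some `d`
and `c'` to some `b`; the minors at `(b, c')`, `(a', d)` and `(a, d)` give successively `a ~ d`,
`b ~ c` and `a' ~ c'`. -/
lemma isBicliqueUnion_of_minors
    (hS : ∀ a ∈ (F.image f)ᶜ, ∀ c ∈ Fᶜ, E a c → ∃ σ ∈ matchings E F f, σ c = a)
    (hB : ∀ a ∈ (F.image f)ᶜ, ∀ c ∈ Fᶜ, E a c →
      IsBicliqueUnion E ((F.image f)ᶜ.erase a) (Fᶜ.erase c)) :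
    IsBicliqueUnion E (F.image f)ᶜ Fᶜ := by
  intro a ha a' ha' c hc c' hc' hac ha'c hac'
  obtain ⟨M, hM, hMc⟩ := hS a ha c hc hac
  have hd : M.symm a' ∈ Fᶜ := symm_apply_mem_compl hM ha'
  have ha'd : E a' (M.symm a') := by simpa using rel_apply hM hd
  rcases eq_or_ne (M.symm a') c' with hdc' | hdc'
  · rwa [← hdc']
  rcases eq_or_ne a a' with rfl | haa'
  · exact hac'
  rcases eq_or_ne c c' with rfl | hcc'
  · exact ha'c
  have hb : M c' ∈ (F.image f)ᶜ := apply_mem_compl_image hM hc'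
  have hbc' : E (M c') c' := rel_apply hM hc'
  have hba : M c' ≠ a := fun h => hcc' (M.injective (hMc.trans h.symm))
  have hba' : M c' ≠ a' := fun h => hdc' (by rw [← h, symm_apply_apply])
  have hdc : M.symm a' ≠ c := fun h => haa' (by rw [← hMc, ← h, apply_symm_apply])
  have had : E a (M.symm a') := hB _ hb _ hc' hbc' a' (mem_erase.2 ⟨hba'.symm, ha'⟩)
    a (mem_erase.2 ⟨hba.symm, ha⟩) c (mem_erase.2 ⟨hcc', hc⟩) _ (mem_erase.2 ⟨hdc', hd⟩)
    ha'c hac ha'd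
  have hbc : E (M c') c := hB a' ha' _ hd ha'd a (mem_erase.2 ⟨haa', ha⟩)
    _ (mem_erase.2 ⟨hba', hb⟩) c' (mem_erase.2 ⟨hdc'.symm, hc'⟩)
    c (mem_erase.2 ⟨hdc.symm, hc⟩) hac' hbc' hac
  exact hB a ha _ hd had _ (mem_erase.2 ⟨hba, hb⟩) a' (mem_erase.2 ⟨haa'.symm, ha'⟩)
    c (mem_erase.2 ⟨hdc.symm, hc⟩) c' (mem_erase.2 ⟨hdc'.symm, hc'⟩) hbc ha'c hbc'

theorem isBicliqueUnion_of_log_card_eq (F : Finset α) (f : α → α)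
    (hS : (matchings E F f).Nonempty) (heq : log #(matchings E F f) = bregmanBound E F f) :
    IsBicliqueUnion E (F.image f)ᶜ Fᶜ := by
  induction hm : #Fᶜ generalizing F f with
  | zero =>
    intro a _ a' _ c hc
    simp [card_eq_zero.1 hm] at hc
  | succ m ih =>
    obtain ⟨σ, hσ⟩ := hS
    have hrow := fun a (ha : a ∈ (F.image f)ᶜ) =>
      mul_log_card_matchings_le_of_minors (E := E) ha fun c _ _ =>
        log_card_matchings_le_bregmanBound _ _
    have htight := (sum_eq_sum_iff_of_le hrow).1 <| by
      rw [sum_row_eq_card_mul_bregmanBound, sum_const, card_compl_image_eq_of_mem_matchings hσ,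
        nsmul_eq_mul, heq, mul_assoc]
    have hedge := fun a (ha : a ∈ (F.image f)ᶜ) c (hc : c ∈ Fᶜ) (hac : E a c) =>
      minor_tight_of_row_tight ⟨σ, hσ⟩ ha hc hac (htight a ha).ge
    refine isBicliqueUnion_of_minors (fun a ha c hc hac =>
      exists_mem_matchings_apply_eq hc hac (hedge a ha c hc hac).1) fun a ha c hc hac => ?_
    obtain ⟨hne, heq'⟩ := hedge a ha c hc hac
    have := ih _ _ hne heq' (by rw [card_compl_insert hc, hm]; rfl)
    rwa [compl_image_insert_update (mem_compl.1 hc), compl_insert] at this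

theorem exists_colouring_of_log_card_eq (f : α → α) (hS : (matchings E ∅ f).Nonempty)
    (heq : log #(matchings E ∅ f) = bregmanBound E ∅ f) :
    ∃ τ : Perm α, ∃ c : α → α, ∀ i j, E (τ i) j ↔ c i = c j := by
  have hB := isBicliqueUnion_of_log_card_eq ∅ f hS heq
  rw [image_empty, compl_empty] at hB
  obtain ⟨τ, hτ⟩ := hS
  exact ⟨τ, exists_colouring_of_isBicliqueUnion hB fun j =>
    (mem_matchings.1 hτ).2 j (notMem_empty j)⟩

lemma factorial_rpow_one_div_eq_exp (k : ℕ) :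
    (k ! : ℝ) ^ (1 / (k : ℝ)) = exp (bregmanTerm k) := by
  rw [rpow_def_of_pos (by exact_mod_cast k.factorial_pos), bregmanTerm, mul_one_div]

variable {A : Matrix α α ℕ}

lemma permanent_eq_card_matchings (hA : ∀ i j, A i j = if E i j then 1 else 0) :
    A.permanent = #(matchings E ∅ id) := by
  rw [Matrix.permanent, matchings, card_filter]
  refine sum_congr rfl fun σ _ => ?_
  simp only [hA, prod_boole, mem_univ, true_implies, notMem_empty, not_false_eq_true,
    IsEmpty.forall_iff, implies_true, true_and]

lemma prod_factorial_rpow_eq_exp_bregmanBound (hA : ∀ i j, A i j = if E i j then 1 else 0) :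
    ∏ i, ((∑ j, A i j)! : ℝ) ^ (1 / ((∑ j, A i j : ℕ) : ℝ)) =
      exp (bregmanBound E ∅ id) := by
  rw [bregmanBound, image_empty, compl_empty, exp_sum]
  refine prod_congr rfl fun i _ => ?_
  rw [← factorial_rpow_one_div_eq_exp, degree, compl_empty]
  simp only [hA, sum_boole, Nat.cast_id]

end BregmanMinc

section BlockMatrix

variable {ι κ : Type*} [DecidableEq κ] {A : Matrix ι ι ℕ} {σ τ : Perm ι} {c : ι → κ}

lemma apply_eq_ite_of_colouring (hA : ∀ i j, A i j = 0 ∨ A i j = 1)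
    (h : ∀ i j, A (σ i) (τ j) = 1 ↔ c i = c j) (i j : ι) :
    A (σ i) (τ j) = if c i = c j then 1 else 0 := by
  rcases hA (σ i) (τ j) with h0 | h1
  · rw [h0, if_neg fun hc => by simpa [h0] using (h i j).2 hc]
  · rw [h1, if_pos ((h i j).1 h1)]

variable [Fintype ι]

lemma prod_factorial_rpow_card_fiber [Fintype κ] (c : ι → κ) :
    ∏ i, ((#{j | c j = c i})! : ℝ) ^ (1 / (#{j | c j = c i} : ℝ)) =
      ∏ v, ((#{j | c j = v})! : ℝ) := by
  rw [← prod_fiberwise univ c]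
  refine prod_congr rfl fun v _ => ?_
  rw [prod_congr rfl fun i hi => by rw [(mem_filter.1 hi).2], prod_const]
  rcases eq_or_ne #{j | c j = v} 0 with h | h
  · simp [h]
  · rw [one_div, rpow_inv_natCast_pow (Nat.cast_nonneg _) h]

lemma sum_apply_eq_card_of_colouring (hA : ∀ i j, A i j = 0 ∨ A i j = 1)
    (h : ∀ i j, A (σ i) (τ j) = 1 ↔ c i = c j) (i : ι) :
    ∑ j, A (σ i) j = #{j | c j = c i} := by
  rw [← Equiv.sum_comp τ]
  simp only [apply_eq_ite_of_colouring hA h, sum_boole, Nat.cast_id]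
  exact congrArg card (filter_congr fun j _ => eq_comm)

variable [DecidableEq ι] [Fintype κ]

lemma permanent_eq_prod_factorial_of_colouring (hA : ∀ i j, A i j = 0 ∨ A i j = 1)
    (h : ∀ i j, A (σ i) (τ j) = 1 ↔ c i = c j) :
    A.permanent = ∏ v, (#{i | c i = v})! := by
  rw [← Matrix.permanent_permute_cols σ, ← Matrix.permanent_permute_rows τ, Matrix.permanent]
  simp only [Matrix.submatrix_apply, id_eq, apply_eq_ite_of_colouring hA h, prod_boole, mem_univ,
    true_implies, sum_boole, Nat.cast_id]
  calc #{g : Perm ι | ∀ i, c (g i) = c i}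
      = Fintype.card {g : Perm ι // c ∘ g = c} := by simp [Fintype.card_subtype, funext_iff]
    _ = _ := by rw [DomMulAct.stabilizer_card]; simp only [Fintype.card_subtype]

theorem permanent_eq_prod_factorial_rpow_of_colouring (hA : ∀ i j, A i j = 0 ∨ A i j = 1)
    (h : ∀ i j, A (σ i) (τ j) = 1 ↔ c i = c j) :
    (A.permanent : ℝ) = ∏ i, ((∑ j, A i j)! : ℝ) ^ (1 / ((∑ j, A i j : ℕ) : ℝ)) := by
  rw [permanent_eq_prod_factorial_of_colouring hA h, ← Equiv.prod_comp σ]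
  simp_rw [sum_apply_eq_card_of_colouring hA h]
  rw [prod_factorial_rpow_card_fiber]
  push_cast
  rfl

end BlockMatrix

open BregmanMinc

theorem bregman_minc_equality_case_general {n : ℕ} (A : Matrix (Fin n) (Fin n) ℕ)
    (hA : ∀ i j, A i j = 0 ∨ A i j = 1) :
    (A.permanent : ℝ) =
        (∏ i : Fin n, ((∑ j, A i j).factorial : ℝ) ^ (1 / ((∑ j, A i j : ℕ) : ℝ)))
      ↔ ∃ (σ τ : Equiv.Perm (Fin n)) (c : Fin n → Fin n),
          ∀ i j, A (σ i) (τ j) = 1 ↔ c i = c j := by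
  refine ⟨fun h => ?_,
    fun ⟨σ, τ, c, h⟩ => permanent_eq_prod_factorial_rpow_of_colouring hA h⟩
  have hAE : ∀ i j, A i j = if A i j = 1 then 1 else 0 := fun i j => by
    rcases hA i j with h | h <;> simp [h]
  let _ : DecidableRel fun i j => A i j = 1 := fun i j => decEq (A i j) 1
  rw [permanent_eq_card_matchings hAE, prod_factorial_rpow_eq_exp_bregmanBound hAE] at h
  have hS : (matchings (fun i j => A i j = 1) ∅ id).Nonempty :=
    card_pos.1 (by exact_mod_cast h ▸ exp_pos _)
  obtain ⟨τ, c, hc⟩ := exists_colouring_of_log_card_eq id hS (by rw [h, log_exp])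
  exact ⟨τ, 1, c, by simpa using hc⟩

/-- Equality case of the Bregman–Minc inequality: for a `0-1` matrix `A` with
all row sums `r i ≥ 1`, `perm A = ∏ i, (r i)! ^ (1 / r i)` iff, after suitable
permutations of the rows and of the columns, `A` is block diagonal with each
diagonal block a square all-ones matrix.  We express the latter by a colouring
`c` of the indices: the permuted matrix has a `1` in position `(i, j)` exactly
when `i` and `j` have the same colour (the blocks are then automatically
square). -/
theorem bregman_minc_equality_case {n : ℕ} (A : Matrix (Fin n) (Fin n) ℕ)
    (hA : ∀ i j, A i j = 0 ∨ A i j = 1) (hr : ∀ i, 1 ≤ ∑ j, A i j) :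
    (A.permanent : ℝ) =
        (∏ i : Fin n, ((∑ j, A i j).factorial : ℝ) ^ (1 / ((∑ j, A i j : ℕ) : ℝ)))
      ↔ ∃ (σ τ : Equiv.Perm (Fin n)) (c : Fin n → Fin n),
          ∀ i j, A (σ i) (τ j) = 1 ↔ c i = c j :=
  bregman_minc_equality_case_general A hA
end
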